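/- For a defective spectrally negative MAP, the matrix of hitting probabilities of level x is given by P[J(T_x)] = e^{Gx} − W(−x) H^{-1} for all real x, where W(x) = 0 for x < 0. -/

import Mathlib

open Matrix

theorem Matrix.exp_mul_exp_neg {m 𝔸 : Type*} [Fintype m] [DecidableEq m] [NormedRing 𝔸]
    [NormedAlgebra ℚ 𝔸] [CompleteSpace 𝔸] (A : Matrix m m 𝔸) :
    NormedSpace.exp A * NormedSpace.exp (-A) = 1 := by
  rw [← Matrix.exp_add_of_commute _ _ (Commute.neg_right (Commute.refl A)), add_neg_cancel,
    NormedSpace.exp_zero]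

/-- For a defective spectrally negative MAP with upward passage generator
`G` (so `P[J(τ_x^+)] = e^{Gx}` for `x ≥ 0`), occupation density matrices `Hx x` at level `0`
up to `τ_x^+` and total occupation matrix `H` (invertible in the defective case), scale
function `W x = e^{-Gx} Hx x` for `x ≥ 0` with `W x = 0` for `x < 0`, and hitting
probability matrices `Phit x = P[J(T_x)]`, one has for all real `x`:
`P[J(T_x)] = e^{Gx} − W(−x) H⁻¹`.  (For `x > 0` hitting equals continuous upward passage,
`Phit x = e^{Gx}`; for `x ≤ 0` the formula combines `Hx x = H − e^{Gx} Phit(−x) H` with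
`W x = e^{-Gx} Hx x`.) -/
theorem hitting_probability_formula
    {n : ℕ}
    (G H : Matrix (Fin n) (Fin n) ℝ)
    (Hx Phit W : ℝ → Matrix (Fin n) (Fin n) ℝ)
    (hHdet : IsUnit H.det)
    (hW : ∀ x : ℝ, 0 ≤ x → W x = NormedSpace.exp ((-x) • G) * Hx x)
    (hWneg : ∀ x : ℝ, x < 0 → W x = 0)
    (hHx : ∀ x : ℝ, 0 ≤ x →
      Hx x = H - NormedSpace.exp (x • G) * Phit (-x) * H)
    (hpos : ∀ x : ℝ, 0 < x → Phit x = NormedSpace.exp (x • G)) :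
    ∀ x : ℝ, Phit x = NormedSpace.exp (x • G) - W (-x) * H⁻¹ := by
  intro x
  rcases lt_or_ge 0 x with hx | hx
  · rw [hpos x hx, hWneg (-x) (neg_neg_of_pos hx), zero_mul, sub_zero]
  · have hscale : W (-x) = (NormedSpace.exp (x • G) - Phit x) * H := by
      rw [hW (-x) (neg_nonneg.2 hx), hHx (-x) (neg_nonneg.2 hx), neg_neg, neg_smul,
        mul_sub, ← mul_assoc, ← mul_assoc, Matrix.exp_mul_exp_neg, one_mul, sub_mul]
    rw [hscale, Matrix.mul_nonsing_inv_cancel_right _ _ hHdet, sub_sub_cancel]
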